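/- For jointly distributed finite random variables with Y = (Y₁,…,Y_L) and X = (X₁,…,X_L), if the conditional total correlation TC(Y|X) > 0, then no pointwise-factorized decoder q(y|x) = ∏ᵢ qᵢ(yᵢ|xᵢ) achieves the Bayes-optimal sequence risk H(Y|X); i.e., every factorized decoder has risk strictly greater than H(Y|X). -/
import Mathlib


open Finset

/-- Conditional Shannon entropy H(Y|X) of a joint pmf (conditioning on first coordinate). -/
noncomputable def condEnt {𝒳 𝒴 : Type*} [Fintype 𝒳] [Fintype 𝒴] (p : 𝒳 × 𝒴 → ℝ) : ℝ :=
  -∑ z : 𝒳 × 𝒴, p z * Real.log (p z / (∑ y : 𝒴, p (z.1, y)))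

/-- Joint marginal of (X, Yᵢ): full vector X with coordinate i of Y. -/
noncomputable def margFull {L : ℕ} {𝒳 V : Type*} [Fintype 𝒳] [Fintype V] [DecidableEq V]
    (p : (Fin L → 𝒳) × (Fin L → V) → ℝ) (i : Fin L) : (Fin L → 𝒳) × V → ℝ :=
  fun ab => ∑ y : Fin L → V, if y i = ab.2 then p (ab.1, y) else 0

/-- Gibbs' inequality (difference form). -/
lemma gibbs_aux {Z : Type*} [Fintype Z] (u v : Z → ℝ)
    (hu : ∀ z, 0 ≤ u z) (hv : ∀ z, 0 ≤ v z)
    (hpos : ∀ z, 0 < u z → 0 < v z)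
    (hsum : ∑ z, v z ≤ ∑ z, u z) :
    ∑ z, u z * (Real.log (v z) - Real.log (u z)) ≤ 0 := by
  have key : ∀ z, u z * (Real.log (v z) - Real.log (u z)) ≤ v z - u z := by
    intro z
    rcases eq_or_lt_of_le (hu z) with h | h
    · rw [← h]; simpa using hv z
    · have hvz := hpos z h
      rw [← Real.log_div hvz.ne' h.ne']
      have hlog : Real.log (v z / u z) ≤ v z / u z - 1 :=
        Real.log_le_sub_one_of_pos (div_pos hvz h)
      have := mul_le_mul_of_nonneg_left hlog h.le
      calc u z * Real.log (v z / u z) ≤ u z * (v z / u z - 1) := this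
        _ = v z - u z := by field_simp
  calc ∑ z, u z * (Real.log (v z) - Real.log (u z)) ≤ ∑ z, (v z - u z) :=
        Finset.sum_le_sum fun z _ => key z
    _ ≤ 0 := by rw [Finset.sum_sub_distrib]; linarith

/-- Cross-entropy lower bound: row-normalized Q cannot beat the conditional entropy. -/
lemma crossEnt_aux {𝒜 V : Type*} [Fintype 𝒜] [Fintype V]
    (r : 𝒜 × V → ℝ) (hr0 : ∀ z, 0 ≤ r z)
    (Q : 𝒜 × V → ℝ) (hQ0 : ∀ z, 0 ≤ Q z) (hQ1 : ∀ a, ∑ b, Q (a, b) = 1)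
    (hpos : ∀ z, 0 < r z → 0 < Q z) :
    ∑ z, r z * Real.log (Q z) ≤ ∑ z, r z * Real.log (r z / ∑ b, r (z.1, b)) := by
  set m : 𝒜 → ℝ := fun a => ∑ b, r (a, b) with hm
  have hm0 : ∀ a, 0 ≤ m a := fun a => Finset.sum_nonneg fun b _ => hr0 _
  have hmr : ∀ z : 𝒜 × V, r z ≤ m z.1 := by
    intro z
    exact Finset.single_le_sum (f := fun b => r (z.1, b)) (fun b _ => hr0 _) (Finset.mem_univ z.2)
  set v : 𝒜 × V → ℝ := fun z => m z.1 * Q z with hvdef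
  have hv0 : ∀ z, 0 ≤ v z := fun z => mul_nonneg (hm0 _) (hQ0 _)
  have hvpos : ∀ z, 0 < r z → 0 < v z := fun z h =>
    mul_pos (lt_of_lt_of_le h (hmr z)) (hpos z h)
  have hsum : ∑ z, v z = ∑ z, r z := by
    rw [Fintype.sum_prod_type, Fintype.sum_prod_type]
    refine Finset.sum_congr rfl fun a _ => ?_
    simp only [hvdef]
    rw [← Finset.mul_sum, hQ1 a, mul_one]
  have hg := gibbs_aux r v hr0 hv0 hvpos (le_of_eq hsum)
  have hptw : ∀ z, r z * Real.log (Q z) - r z * Real.log (r z / m z.1)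
      = r z * (Real.log (v z) - Real.log (r z)) := by
    intro z
    rcases eq_or_lt_of_le (hr0 z) with h | h
    · rw [← h]; ring
    · have hmz : 0 < m z.1 := lt_of_lt_of_le h (hmr z)
      have hQz := hpos z h
      simp only [hvdef]
      rw [Real.log_div h.ne' hmz.ne', Real.log_mul hmz.ne' hQz.ne']
      ring
  have : ∑ z, (r z * Real.log (Q z) - r z * Real.log (r z / m z.1))
      = ∑ z, r z * (Real.log (v z) - Real.log (r z)) :=
    Finset.sum_congr rfl fun z _ => hptw z
  rw [Finset.sum_sub_distrib] at this
  linarith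

/-- Regrouping: sums against the marginal equal sums against the joint. -/
lemma regroup_aux {L : ℕ} {𝒳 V : Type*} [Fintype 𝒳] [Fintype V] [DecidableEq V]
    (p : (Fin L → 𝒳) × (Fin L → V) → ℝ) (i : Fin L) (g : (Fin L → 𝒳) × V → ℝ) :
    ∑ w : (Fin L → 𝒳) × V, margFull p i w * g w
      = ∑ z : (Fin L → 𝒳) × (Fin L → V), p z * g (z.1, z.2 i) := by
  rw [Fintype.sum_prod_type, Fintype.sum_prod_type]
  refine Finset.sum_congr rfl fun a _ => ?_
  unfold margFull
  simp only [Finset.sum_mul, ite_mul, zero_mul]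
  rw [Finset.sum_comm]
  refine Finset.sum_congr rfl fun y _ => ?_
  simp

/-- If the conditional total correlation TC(Y|X) = ∑ᵢ H(Yᵢ|X) − H(Y|X) is strictly
positive, then every pointwise-factorized decoder q(y|x) = ∏ᵢ qᵢ(yᵢ|xᵢ) has risk
strictly greater than the Bayes-optimal sequence risk H(Y|X). -/
theorem factorized_risk_gt_of_tc_pos
    {L : ℕ} {𝒳 V : Type*} [Fintype 𝒳] [Fintype V] [DecidableEq V]
    (p : (Fin L → 𝒳) × (Fin L → V) → ℝ)
    (hp0 : ∀ z, 0 ≤ p z) (hp1 : ∑ z, p z = 1)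
    (hTC : 0 < (∑ i, condEnt (margFull p i)) - condEnt p) :
    ∀ q : Fin L → 𝒳 → V → ℝ,
      (∀ i a b, 0 ≤ q i a b) → (∀ i a, ∑ b, q i a b = 1) →
      (∀ z, 0 < p z → ∀ i, 0 < q i (z.1 i) (z.2 i)) →
      condEnt p < -∑ z, p z * ∑ i, Real.log (q i (z.1 i) (z.2 i)) := by
  intro q hq0 hq1 hqpos
  have hmarg0 : ∀ i z, 0 ≤ margFull p i z := by
    intro i z
    refine Finset.sum_nonneg fun y _ => ?_
    split
    · exact hp0 _
    · exact le_rfl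
  have key : ∀ i, condEnt (margFull p i) ≤ -∑ z, p z * Real.log (q i (z.1 i) (z.2 i)) := by
    intro i
    set Q : (Fin L → 𝒳) × V → ℝ := fun w => q i (w.1 i) w.2 with hQdef
    have hpos : ∀ w, 0 < margFull p i w → 0 < Q w := by
      intro w hw
      obtain ⟨y, _, hy⟩ := Finset.exists_ne_zero_of_sum_ne_zero hw.ne'
      by_cases hyi : y i = w.2
      · rw [if_pos hyi] at hy
        have hpy : 0 < p (w.1, y) := lt_of_le_of_ne (hp0 _) (Ne.symm hy)
        have := hqpos (w.1, y) hpy i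
        simpa [hQdef, hyi] using this
      · rw [if_neg hyi] at hy; exact absurd rfl hy
    have hce := crossEnt_aux (margFull p i) (hmarg0 i) Q
      (fun w => hq0 _ _ _) (fun a => hq1 i (a i)) hpos
    have hmargcond : ∀ w : (Fin L → 𝒳) × V,
        (∑ b, margFull p i (w.1, b)) = ∑ b, margFull p i (w.1, b) := fun _ => rfl
    have hre : ∑ w : (Fin L → 𝒳) × V, margFull p i w * Real.log (Q w)
        = ∑ z, p z * Real.log (q i (z.1 i) (z.2 i)) := by
      have := regroup_aux p i (fun w => Real.log (Q w))
      simpa [hQdef] using this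
    unfold condEnt
    rw [hre] at hce
    linarith
  have hswap : ∑ z, p z * ∑ i, Real.log (q i (z.1 i) (z.2 i))
      = ∑ i, ∑ z, p z * Real.log (q i (z.1 i) (z.2 i)) := by
    simp_rw [Finset.mul_sum]
    rw [Finset.sum_comm]
  calc condEnt p < ∑ i, condEnt (margFull p i) := by linarith
    _ ≤ ∑ i, -∑ z, p z * Real.log (q i (z.1 i) (z.2 i)) :=
        Finset.sum_le_sum fun i _ => key i
    _ = -∑ z, p z * ∑ i, Real.log (q i (z.1 i) (z.2 i)) := by
        rw [hswap, Finset.sum_neg_distrib]
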